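/- arXiv:0811.2546 — 3 statements merged into one kernel-verified Lean document; each statement's English description precedes it below -/
import Mathlib

section
/- Let ρ = ρ(n) ≥ κ·ln n for some constant κ > 0, and let 0 ≤ q_0 < q_1 ≤ 1 be constants. Then, with high probability over φ drawn from Φ^plant(n, ρn), every assignment with exactly q_0·n variables set to 0 satisfies strictly more clauses of φ than any assignment with exactly q_1·n variables set to 0. -/
/-!
Fix `u` with `q₀n` zeros and `v` with `q₁n` zeros. The planted clauses falsified by `u` are in
bijection with the triples of variables not all set to `1` by `u`, so among the planted clauses
`u` satisfies `(ones u)₃ - (ones v)₃ ≥ ((q₁ - q₀) n)³ / 8` more than `v`, out of at most `8 n³`: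
a uniformly random planted clause favours `u` with a constant drift `δ = (q₁ - q₀)³ / 64`.
An exponential-moment (Chernoff) bound turns this drift into `P(v ≥ u) ≤ (1 - δ² / 4)^m`, and the
union bound over the `4^n` pairs is beaten by `(1 - δ² / 4)^m ≤ exp (-δ² κ n ln n / 4)`.
-/

open Finset Filter
open scoped Classical Topology

/-- An assignment of Boolean values to `n` variables. -/
abbrev Assignment (n : ℕ) := Fin n → Bool

/-- A 3-clause over `n` variables: three distinct variables (an embedding `Fin 3 ↪ Fin n`)
together with signs for the three literals (`true` = positive literal). -/
abbrev Clause (n : ℕ) := (Fin 3 ↪ Fin n) × (Fin 3 → Bool)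

/-- A 3-CNF formula with `m` clauses over `n` variables: a sequence of `m` clauses
(repetitions allowed). -/
abbrev Formula (n m : ℕ) := Fin m → Clause n

/-- The `i`-th literal of clause `c` is satisfied by assignment `u`. -/
def litSat {n : ℕ} (u : Assignment n) (c : Clause n) (i : Fin 3) : Prop :=
  u (c.1 i) = c.2 i

/-- Clause `c` is satisfied by assignment `u`. -/
def clauseSat {n : ℕ} (u : Assignment n) (c : Clause n) : Prop := ∃ i, litSat u c i

/-- The formula `φ` is satisfied by assignment `u`. -/
def Sat {n m : ℕ} (φ : Formula n m) (u : Assignment n) : Prop := ∀ j, clauseSat u (φ j)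

/-- `φ` belongs to the support of the planted distribution `Φ^plant(n, m)`:
every clause contains at least one positive literal, i.e. the all-ones (planted)
assignment satisfies `φ`.  The planted distribution is uniform on such formulas. -/
def Planted {n m : ℕ} (φ : Formula n m) : Prop := ∀ j, ∃ i, (φ j).2 i = true

/-- The number of clauses of `φ` unsatisfied by `u`. -/
noncomputable def numUnsat {n m : ℕ} (φ : Formula n m) (u : Assignment n) : ℕ :=
  (univ.filter fun j => ¬ clauseSat u (φ j)).card

/-- The number of clauses of `φ` satisfied by `u`. -/
noncomputable def numSat {n m : ℕ} (φ : Formula n m) (u : Assignment n) : ℕ :=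
  (univ.filter fun j => clauseSat u (φ j)).card

/-- Flip the value of variable `i` in assignment `u`. -/
def flipVar {n : ℕ} (u : Assignment n) (i : Fin n) : Assignment n :=
  Function.update u i (!u i)

/-- `u` is a local minimum of `φ`: no single-variable flip strictly decreases the
number of unsatisfied clauses. -/
def LocalMinAssn {n m : ℕ} (φ : Formula n m) (u : Assignment n) : Prop :=
  ∀ i, numUnsat φ u ≤ numUnsat φ (flipVar u i)

/-- `u` is a proper local minimum of `φ`: a local minimum that does not satisfy `φ`. -/
def ProperLocalMin {n m : ℕ} (φ : Formula n m) (u : Assignment n) : Prop :=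
  LocalMinAssn φ u ∧ ¬ Sat φ u

/-- The number of variables assigned `0` by `u`. -/
noncomputable def numZeros {n : ℕ} (u : Assignment n) : ℕ :=
  (univ.filter fun i => u i = false).card

/-- The number of variables assigned `1` by `u`. -/
noncomputable def numOnes {n : ℕ} (u : Assignment n) : ℕ :=
  (univ.filter fun i => u i = true).card

/-- Conditional probability `P(E | F)` for the uniform distribution on a finite type. -/
noncomputable def condProb {α : Type*} [Fintype α] (F E : α → Prop) : ℝ :=
  ((univ.filter fun a => F a ∧ E a).card : ℝ) / ((univ.filter F).card : ℝ)

/-- Probability of the event `E` for a random formula drawn from the (uniform) planted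
distribution `Φ^plant(n, m)`. -/
noncomputable def prPlanted (n m : ℕ) (E : Formula n m → Prop) : ℝ :=
  condProb Planted E

/-- Expectation of `f` over a random formula from the planted distribution
`Φ^plant(n, m)`. -/
noncomputable def avgPlanted (n m : ℕ) (f : Formula n m → ℝ) : ℝ :=
  (∑ φ ∈ univ.filter (Planted (n := n) (m := m)), f φ) /
    ((univ.filter (Planted (n := n) (m := m))).card : ℝ)

section CondProb

variable {α : Type*} [Fintype α] (F : α → Prop)

theorem condProb_le_one (E : α → Prop) : condProb F E ≤ 1 :=
  div_le_one_of_le₀ (mod_cast card_le_card (monotone_filter_right _ fun _ _ h => h.1))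
    (Nat.cast_nonneg _)

theorem condProb_not (hF : ∃ a, F a) (E : α → Prop) :
    condProb F (fun a => ¬ E a) = 1 - condProb F E := by
  have hpos : (0 : ℝ) < #(univ.filter F) := by
    obtain ⟨a, ha⟩ := hF
    exact_mod_cast card_pos.2 ⟨a, mem_filter.2 ⟨mem_univ a, ha⟩⟩
  have hsplit := card_filter_add_card_filter_not (s := univ.filter F) E
  simp only [filter_filter] at hsplit
  unfold condProb
  rw [eq_sub_iff_add_eq, ← add_div, div_eq_one_iff_eq hpos.ne', ← hsplit]
  push_cast
  ring

theorem condProb_mono {E E' : α → Prop} (h : ∀ a, F a → E a → E' a) :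
    condProb F E ≤ condProb F E' :=
  div_le_div_of_nonneg_right
    (mod_cast card_le_card (monotone_filter_right _ fun a _ ha => ⟨ha.1, h a ha.1 ha.2⟩))
    (Nat.cast_nonneg _)

theorem condProb_exists_mem_le_sum {ι : Type*} (s : Finset ι) (E : ι → α → Prop) :
    condProb F (fun a => ∃ i ∈ s, E i a) ≤ ∑ i ∈ s, condProb F (E i) := by
  have hunion : univ.filter (fun a => F a ∧ ∃ i ∈ s, E i a)
      = s.biUnion fun i => univ.filter fun a => F a ∧ E i a := by
    ext a
    simp only [mem_filter, mem_univ, true_and, mem_biUnion]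
    tauto
  simp only [condProb]
  rw [← sum_div, hunion]
  gcongr
  exact_mod_cast card_biUnion_le

end CondProb

section Chernoff

variable {α : Type*} (S : Finset α) (f : α → ℝ) (m : ℕ)

theorem card_filter_sum_nonneg_le_sum_exp_pow {t : ℝ} (ht : 0 ≤ t) :
    (#((Fintype.piFinset fun _ : Fin m => S).filter fun φ => 0 ≤ ∑ j, f (φ j)) : ℝ)
      ≤ (∑ c ∈ S, Real.exp (t * f c)) ^ m := by
  set P := Fintype.piFinset fun _ : Fin m => S with hP
  calc (#(P.filter fun φ => 0 ≤ ∑ j, f (φ j)) : ℝ)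
      = ∑ φ ∈ P.filter fun φ => 0 ≤ ∑ j, f (φ j), 1 := by simp
    _ ≤ ∑ φ ∈ P.filter fun φ => 0 ≤ ∑ j, f (φ j), Real.exp (t * ∑ j, f (φ j)) :=
        sum_le_sum fun φ hφ => Real.one_le_exp (mul_nonneg ht (mem_filter.1 hφ).2)
    _ ≤ ∑ φ ∈ P, Real.exp (t * ∑ j, f (φ j)) :=
        sum_le_sum_of_subset_of_nonneg (filter_subset _ _) fun _ _ _ => (Real.exp_pos _).le
    _ = ∑ φ ∈ P, ∏ j, Real.exp (t * f (φ j)) := by simp only [mul_sum, Real.exp_sum]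
    _ = ∏ _j : Fin m, ∑ c ∈ S, Real.exp (t * f c) := by
        rw [hP]
        exact (prod_univ_sum (fun _ : Fin m => S) fun _ c => Real.exp (t * f c)).symm
    _ = (∑ c ∈ S, Real.exp (t * f c)) ^ m := by simp

variable {S f}

/-- With `t = δ / 2`, the bound `exp x ≤ 1 + x + x²` on `[-1, 1]` gives
`∑ exp (t f) ≤ #S (1 - δ t + t²) = #S (1 - δ² / 4)`. -/
theorem sum_exp_le_of_sum_le {δ : ℝ} (hδ0 : 0 ≤ δ) (hδ2 : δ ≤ 2) (hf : ∀ c ∈ S, |f c| ≤ 1)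
    (hsum : ∑ c ∈ S, f c ≤ -(δ * #S)) :
    ∑ c ∈ S, Real.exp (δ / 2 * f c) ≤ #S * (1 - δ ^ 2 / 4) := by
  have hquad : ∀ c ∈ S, Real.exp (δ / 2 * f c) ≤ 1 + δ / 2 * f c + (δ / 2) ^ 2 := by
    intro c hc
    have hx : |δ / 2 * f c| ≤ 1 := by
      rw [abs_mul, abs_of_nonneg (by positivity)]
      nlinarith [hf c hc, abs_nonneg (f c)]
    have hsq : (δ / 2 * f c) ^ 2 ≤ (δ / 2) ^ 2 := by
      rw [mul_pow, ← sq_abs (f c)]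
      exact mul_le_of_le_one_right (sq_nonneg _) (pow_le_one₀ (abs_nonneg _) (hf c hc))
    linarith [(abs_le.1 (Real.abs_exp_sub_one_sub_id_le hx)).2]
  calc ∑ c ∈ S, Real.exp (δ / 2 * f c)
      ≤ ∑ c ∈ S, (1 + δ / 2 * f c + (δ / 2) ^ 2) := sum_le_sum hquad
    _ = #S * (1 + (δ / 2) ^ 2) + δ / 2 * ∑ c ∈ S, f c := by
        simp only [sum_add_distrib, sum_const, nsmul_eq_mul, mul_one, ← mul_sum]
        ring
    _ ≤ #S * (1 - δ ^ 2 / 4) := by nlinarith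

theorem card_filter_sum_nonneg_le {δ : ℝ} (hδ0 : 0 ≤ δ) (hδ2 : δ ≤ 2)
    (hf : ∀ c ∈ S, |f c| ≤ 1) (hsum : ∑ c ∈ S, f c ≤ -(δ * #S)) :
    (#((Fintype.piFinset fun _ : Fin m => S).filter fun φ => 0 ≤ ∑ j, f (φ j)) : ℝ)
      ≤ (#S * (1 - δ ^ 2 / 4)) ^ m :=
  (card_filter_sum_nonneg_le_sum_exp_pow S f m (by positivity)).trans
    (pow_le_pow_left₀ (sum_nonneg fun _ _ => (Real.exp_pos _).le)
      (sum_exp_le_of_sum_le hδ0 hδ2 hf hsum) m)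

end Chernoff

theorem card_filter_embedding_forall {α β : Type*} [Fintype α] [Fintype β] (p : β → Prop)
    [DecidablePred p] :
    #(univ.filter fun e : α ↪ β => ∀ i, p (e i))
      = (#(univ.filter p)).descFactorial (Fintype.card α) := by
  rw [← Fintype.card_subtype, ← Fintype.card_subtype, ← Fintype.card_embedding_eq]
  exact Fintype.card_congr
    { toFun := fun e =>
        ⟨fun i => ⟨e.1 i, e.2 i⟩, fun _ _ h => e.1.injective (congrArg Subtype.val h)⟩
      invFun := fun e => ⟨e.trans (Function.Embedding.subtype p), fun i => (e i).2⟩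
      left_inv := fun _ => rfl
      right_inv := fun _ => rfl }

theorem numZeros_add_numOnes {n : ℕ} (u : Assignment n) : numZeros u + numOnes u = n := by
  simpa [numZeros, numOnes] using card_filter_add_card_filter_not (s := univ) fun i => u i = false

theorem cast_descFactorial_three (a : ℕ) :
    (a.descFactorial 3 : ℝ) = a * (a - 1) * (a - 2) := by
  rcases a with _ | _ | a
  · simp
  · simp
  · simp [Nat.descFactorial_succ]; ring

theorem cube_div_eight_le_descFactorial_three_sub {a b : ℕ} (h : 4 ≤ (a : ℝ) - b) :
    ((a : ℝ) - b) ^ 3 / 8 ≤ (a.descFactorial 3 : ℝ) - b.descFactorial 3 := by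
  rw [cast_descFactorial_three, cast_descFactorial_three]
  set d := (a : ℝ) - b
  have hb : (0 : ℝ) ≤ b := Nat.cast_nonneg b
  have ha : (a : ℝ) = b + d := by ring
  rw [ha]
  have hd : 0 ≤ d := by linarith
  nlinarith [mul_nonneg (mul_nonneg hb hd) (by linarith : (0 : ℝ) ≤ b + d - 2),
    mul_nonneg hd (by linarith : (0 : ℝ) ≤ d - 4)]

section Planted

variable {n m : ℕ}

noncomputable def plantedClauses (n : ℕ) : Finset (Clause n) :=
  univ.filter fun c => ∃ i, c.2 i = true

theorem filter_planted_eq_piFinset :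
    univ.filter (Planted (n := n) (m := m)) = Fintype.piFinset fun _ => plantedClauses n := by
  ext φ
  simp [Planted, plantedClauses]

theorem prPlanted_eq_card_div (E : Formula n m → Prop) :
    prPlanted n m E = #((Fintype.piFinset fun _ => plantedClauses n).filter E)
      / (#(plantedClauses n) : ℝ) ^ m := by
  rw [prPlanted, condProb, ← filter_filter, filter_planted_eq_piFinset, Fintype.card_piFinset,
    prod_const, card_univ, Fintype.card_fin, Nat.cast_pow]

theorem exists_planted (hn : 3 ≤ n) : ∃ φ : Formula n m, Planted φ :=
  ⟨fun _ => (Fin.castLEEmb hn, fun _ => true), fun _ => ⟨0, rfl⟩⟩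

theorem card_plantedClauses_le : (#(plantedClauses n) : ℝ) ≤ 8 * n ^ 3 := by
  have hcard : #(plantedClauses n) ≤ n.descFactorial 3 * 8 := by
    simpa [Fintype.card_embedding_eq] using card_le_univ (plantedClauses n)
  have := Nat.descFactorial_le_pow n 3
  calc (#(plantedClauses n) : ℝ) ≤ (n ^ 3 * 8 : ℕ) := by gcongr; omega
    _ = 8 * n ^ 3 := by push_cast; ring

theorem not_clauseSat_iff (u : Assignment n) (c : Clause n) :
    ¬ clauseSat u c ↔ ∀ i, c.2 i = !u (c.1 i) := by
  simp only [clauseSat, litSat, not_exists]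
  refine forall_congr' fun i => ?_
  cases u (c.1 i) <;> cases c.2 i <;> simp

/-- A triple of variables carries exactly one clause falsified by `u`, the one whose signs are
opposite to `u`; it is planted unless `u` sets all three variables to `1`. -/
theorem card_filter_not_clauseSat_add_descFactorial (u : Assignment n) :
    #((plantedClauses n).filter fun c => ¬ clauseSat u c) + (numOnes u).descFactorial 3
      = n.descFactorial 3 := by
  have hones := card_filter_embedding_forall (α := Fin 3) fun x => u x = true
  have hsplit := card_filter_add_card_filter_not (s := univ) fun e : Fin 3 ↪ Fin n =>
    ∀ i, u (e i) = true
  rw [Fintype.card_fin] at hones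
  rw [card_univ, Fintype.card_embedding_eq, Fintype.card_fin, Fintype.card_fin] at hsplit
  have hunsat : #((plantedClauses n).filter fun c => ¬ clauseSat u c)
      = #(univ.filter fun e : Fin 3 ↪ Fin n => ¬ ∀ i, u (e i) = true) := by
    refine card_nbij' (·.1) (fun e => (e, fun i => !u (e i))) ?_ ?_ ?_ ?_
    · intro c hc
      simp only [coe_filter, plantedClauses, mem_filter, mem_univ, true_and, Set.mem_ofPred_eq,
        not_clauseSat_iff] at hc ⊢
      obtain ⟨⟨i, hi⟩, hneg⟩ := hc
      exact fun hall => by simp [hneg i, hall i] at hi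
    · intro e he
      simp only [coe_filter, plantedClauses, mem_filter, mem_univ, true_and, Set.mem_ofPred_eq,
        not_clauseSat_iff, not_forall] at he ⊢
      obtain ⟨i, hi⟩ := he
      exact ⟨⟨i, by simpa using hi⟩, fun _ => trivial⟩
    · intro c hc
      simp only [coe_filter, not_clauseSat_iff, Set.mem_ofPred_eq] at hc
      exact Prod.ext rfl (funext fun i => (hc.2 i).symm)
    · intro e _
      rfl
  rw [hunsat, numOnes, ← hones, add_comm]
  convert hsplit

end Planted

section Comparison

variable {n m : ℕ}

noncomputable def satDiff (u v : Assignment n) (c : Clause n) : ℝ :=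
  (if clauseSat v c then 1 else 0) - (if clauseSat u c then 1 else 0)

theorem abs_satDiff_le (u v : Assignment n) (c : Clause n) : |satDiff u v c| ≤ 1 := by
  unfold satDiff
  split_ifs <;> norm_num

theorem sum_satDiff_formula (φ : Formula n m) (u v : Assignment n) :
    ∑ j, satDiff u v (φ j) = (numSat φ v : ℝ) - numSat φ u := by
  simp only [satDiff, sum_sub_distrib, sum_boole, numSat]

theorem sum_satDiff_plantedClauses (u v : Assignment n) :
    ∑ c ∈ plantedClauses n, satDiff u v c
      = ((numOnes v).descFactorial 3 : ℝ) - (numOnes u).descFactorial 3 := by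
  have hu := card_filter_not_clauseSat_add_descFactorial u
  have hv := card_filter_not_clauseSat_add_descFactorial v
  have hsu := card_filter_add_card_filter_not (s := plantedClauses n) (clauseSat u)
  have hsv := card_filter_add_card_filter_not (s := plantedClauses n) (clauseSat v)
  simp only [satDiff, sum_sub_distrib, sum_boole]
  rify at hu hv hsu hsv
  linarith

theorem prPlanted_numSat_le_numSat_le {u v : Assignment n} {δ : ℝ} (hδ0 : 0 ≤ δ) (hδ2 : δ ≤ 2)
    (h : δ * #(plantedClauses n)
      ≤ ((numOnes u).descFactorial 3 : ℝ) - (numOnes v).descFactorial 3) :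
    prPlanted n m (fun φ => numSat φ u ≤ numSat φ v) ≤ (1 - δ ^ 2 / 4) ^ m := by
  have hevent : prPlanted n m (fun φ => numSat φ u ≤ numSat φ v)
      = prPlanted n m (fun φ => 0 ≤ ∑ j, satDiff u v (φ j)) := by
    simp only [sum_satDiff_formula, sub_nonneg, Nat.cast_le]
  rw [hevent, prPlanted_eq_card_div]
  refine div_le_of_le_mul₀ (by positivity) (pow_nonneg (by nlinarith) m) ?_
  rw [← mul_pow, mul_comm]
  convert card_filter_sum_nonneg_le m hδ0 hδ2 (fun c _ => abs_satDiff_le u v c) ?_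
  rw [sum_satDiff_plantedClauses]
  linarith

theorem mul_card_plantedClauses_le_descFactorial_sub {q0 q1 : ℝ} {u v : Assignment n}
    (hu : (numZeros u : ℝ) = q0 * n) (hv : (numZeros v : ℝ) = q1 * n)
    (hn : 4 ≤ (q1 - q0) * n) :
    (q1 - q0) ^ 3 / 64 * #(plantedClauses n)
      ≤ ((numOnes u).descFactorial 3 : ℝ) - (numOnes v).descFactorial 3 := by
  have hε : 0 ≤ q1 - q0 := by nlinarith [Nat.cast_nonneg (α := ℝ) n]
  have hdiff : (numOnes u : ℝ) - numOnes v = (q1 - q0) * n := by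
    have hu' : ((numZeros u + numOnes u : ℕ) : ℝ) = n := congrArg _ (numZeros_add_numOnes u)
    have hv' : ((numZeros v + numOnes v : ℕ) : ℝ) = n := congrArg _ (numZeros_add_numOnes v)
    push_cast at hu' hv'
    linarith
  calc (q1 - q0) ^ 3 / 64 * #(plantedClauses n)
      ≤ (q1 - q0) ^ 3 / 64 * (8 * n ^ 3) := by gcongr; exact card_plantedClauses_le
    _ = ((q1 - q0) * n) ^ 3 / 8 := by ring
    _ ≤ _ := hdiff ▸ cube_div_eight_le_descFactorial_three_sub (hdiff ▸ hn)

theorem card_assignment_pairs_le (s : Finset (Assignment n × Assignment n)) :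
    (#s : ℝ) ≤ 4 ^ n := by
  have hs := card_le_univ s
  simp only [Fintype.card_prod, Fintype.card_fun, Fintype.card_bool, Fintype.card_fin] at hs
  calc (#s : ℝ) ≤ (2 ^ n * 2 ^ n : ℕ) := by exact_mod_cast hs
    _ = 4 ^ n := by push_cast; rw [← mul_pow]; norm_num

def FewerZerosBetter (q0 q1 : ℝ) (φ : Formula n m) : Prop :=
  ∀ u v : Assignment n, (numZeros u : ℝ) = q0 * n → (numZeros v : ℝ) = q1 * n →
    numSat φ v < numSat φ u

theorem one_sub_le_prPlanted_fewerZerosBetter {q0 q1 : ℝ} (hq0 : 0 ≤ q0) (hq1 : q1 ≤ 1)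
    (hn : 4 ≤ (q1 - q0) * n) :
    1 - 4 ^ n * (1 - (q1 - q0) ^ 6 / 16384) ^ m ≤ prPlanted n m (FewerZerosBetter q0 q1) := by
  have hε : 0 ≤ q1 - q0 := by nlinarith [Nat.cast_nonneg (α := ℝ) n]
  have hε1 : q1 - q0 ≤ 1 := by linarith
  have hn3 : 3 ≤ n := by
    have : (3 : ℝ) ≤ n := by nlinarith
    exact_mod_cast this
  have hδ2 : (q1 - q0) ^ 3 / 64 ≤ 2 := by nlinarith [pow_le_one₀ hε hε1 (n := 3)]
  set pairs := univ.filter fun p : Assignment n × Assignment n =>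
    (numZeros p.1 : ℝ) = q0 * n ∧ (numZeros p.2 : ℝ) = q1 * n
  have hbad : prPlanted n m (fun φ => ¬ FewerZerosBetter q0 q1 φ)
      ≤ 4 ^ n * (1 - (q1 - q0) ^ 6 / 16384) ^ m :=
    calc prPlanted n m (fun φ => ¬ FewerZerosBetter q0 q1 φ)
        ≤ prPlanted n m (fun φ => ∃ p ∈ pairs, numSat φ p.1 ≤ numSat φ p.2) := by
          refine condProb_mono _ fun φ _ h => ?_
          simp only [FewerZerosBetter, not_forall, not_lt] at h
          obtain ⟨u, v, hu, hv, hle⟩ := h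
          exact ⟨(u, v), by simp [pairs, hu, hv], hle⟩
      _ ≤ ∑ p ∈ pairs, prPlanted n m (fun φ => numSat φ p.1 ≤ numSat φ p.2) :=
          condProb_exists_mem_le_sum _ _ _
      _ ≤ #pairs • (1 - ((q1 - q0) ^ 3 / 64) ^ 2 / 4) ^ m := by
          refine sum_le_card_nsmul _ _ _ fun p hp => ?_
          obtain ⟨hu, hv⟩ := (mem_filter.1 hp).2
          exact prPlanted_numSat_le_numSat_le (by positivity) hδ2
            (mul_card_plantedClauses_le_descFactorial_sub hu hv hn)
      _ ≤ 4 ^ n * (1 - (q1 - q0) ^ 6 / 16384) ^ m := by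
          rw [nsmul_eq_mul, show ((q1 - q0) ^ 3 / 64) ^ 2 / 4 = (q1 - q0) ^ 6 / 16384 by ring]
          exact mul_le_mul_of_nonneg_right (card_assignment_pairs_le pairs)
            (pow_nonneg (by nlinarith [pow_le_one₀ hε hε1 (n := 6)]) m)
  have hcompl := condProb_not _ (exists_planted (m := m) hn3) (FewerZerosBetter q0 q1)
  rw [prPlanted] at hbad ⊢
  linarith

end Comparison

theorem tendsto_pow_mul_one_sub_pow_nhds_zero {C γ κ : ℝ} (hC : 0 < C) (hγ : 0 < γ)
    (hγ1 : γ ≤ 1) (hκ : 0 < κ) {m : ℕ → ℕ}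
    (hm : ∀ᶠ n : ℕ in atTop, κ * Real.log n * n ≤ m n) :
    Tendsto (fun n : ℕ => C ^ n * (1 - γ) ^ m n) atTop (𝓝 0) := by
  have hexponent : Tendsto (fun n : ℕ => (n : ℝ) * (Real.log C - γ * κ * Real.log n))
      atTop atBot :=
    tendsto_natCast_atTop_atTop.atTop_mul_atBot₀ <| tendsto_atBot_add_const_left _ _ <|
      tendsto_neg_atTop_atBot.comp <|
        (Real.tendsto_log_atTop.comp tendsto_natCast_atTop_atTop).const_mul_atTop
          (by positivity)
  refine squeeze_zero' (Eventually.of_forall fun n => ?_) (hm.mono fun n hn => ?_)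
    (Real.tendsto_exp_atBot.comp hexponent)
  · exact mul_nonneg (pow_nonneg hC.le n) (pow_nonneg (by linarith) _)
  · calc C ^ n * (1 - γ) ^ m n ≤ Real.exp (Real.log C) ^ n * Real.exp (-γ) ^ m n := by
          rw [Real.exp_log hC]
          gcongr
          linarith [Real.add_one_le_exp (-γ)]
      _ = Real.exp (n * Real.log C - γ * m n) := by
          rw [← Real.exp_nat_mul, ← Real.exp_nat_mul, ← Real.exp_add]
          congr 1
          ring
      _ ≤ Real.exp (n * (Real.log C - γ * κ * Real.log n)) := by
          gcongr
          nlinarith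

/-- **Lemma (fewer zeros is better).**  If `ρ = ρ(n) ≥ κ · ln n` for a constant `κ > 0`
and `0 ≤ q₀ < q₁ ≤ 1` are constants, then whp over `φ ∈ Φ^plant(n, ρn)` every assignment
with exactly `q₀·n` variables set to `0` satisfies strictly more clauses than any
assignment with exactly `q₁·n` variables set to `0`. -/
theorem fewer_zeros_better_whp (κ : ℝ) (hκ : 0 < κ)
    (q0 q1 : ℝ) (hq0 : 0 ≤ q0) (hq01 : q0 < q1) (hq1 : q1 ≤ 1) (m : ℕ → ℕ)
    (hρ : ∀ᶠ n : ℕ in atTop, κ * Real.log n * n ≤ (m n : ℝ)) :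
    Tendsto (fun n : ℕ => prPlanted n (m n) fun φ =>
        ∀ u v : Assignment n, (numZeros u : ℝ) = q0 * n → (numZeros v : ℝ) = q1 * n →
          numSat φ v < numSat φ u)
      atTop (𝓝 1) := by
  have hε : 0 < q1 - q0 := sub_pos.2 hq01
  have hγ1 : (q1 - q0) ^ 6 / 16384 ≤ 1 := by
    nlinarith [pow_le_one₀ hε.le (by linarith : q1 - q0 ≤ 1) (n := 6)]
  have herror := tendsto_pow_mul_one_sub_pow_nhds_zero four_pos (by positivity) hγ1 hκ hρ
  have hlarge : ∀ᶠ n : ℕ in atTop, 4 ≤ (q1 - q0) * n :=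
    (tendsto_natCast_atTop_atTop.const_mul_atTop hε).eventually_ge_atTop 4
  refine tendsto_of_tendsto_of_tendsto_of_le_of_le' (by simpa using herror.const_sub 1)
    tendsto_const_nhds (hlarge.mono fun n hn => ?_) (Eventually.of_forall fun n => ?_)
  · exact one_sub_le_prPlanted_fewerZerosBetter hq0 hq1 hn
  · exact condProb_le_one _ _
end

section
/- Let φ be a 3-CNF containing a crown with clauses c = (x1 ∨ x2 ∨ x3), c1 = (¬x1 ∨ x4 ∨ x5), c2 = (¬x2 ∨ x6 ∨ x7), c3 = (¬x3 ∨ x8 ∨ x9). Then any assignment u that assigns 0 to all of x1,…,x9 leaves the clause c unsatisfied, and no single flip of any of the variables x1,…,x9 strictly decreases the number of unsatisfied clauses of φ; consequently Local Search started from such an assignment never changes the values of x1,…,x9 and never satisfies c, even though the crown subformula is satisfiable. -/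
open Finset Filter
open scoped Classical Topology

/-- Clause `c` contains the literal on variable `x` with sign `b`. -/
def hasLit {n : ℕ} (c : Clause n) (x : Fin n) (b : Bool) : Prop := ∃ i, c.1 i = x ∧ c.2 i = b

/-- Clause `c` is (as a disjunction of literals) exactly the clause with the three
given literals: since the three variables of a clause are distinct, containing all
three literals means being equal to this clause. -/
def clauseIs {n : ℕ} (c : Clause n) (x1 : Fin n) (b1 : Bool) (x2 : Fin n) (b2 : Bool)
    (x3 : Fin n) (b3 : Bool) : Prop :=
  hasLit c x1 b1 ∧ hasLit c x2 b2 ∧ hasLit c x3 b3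


/-!
While x₁, …, x₉ are all false the crown has exactly one unsatisfied clause, c, and it still has
exactly one after flipping any single xₖ: flipping x₁ satisfies c but falsifies c₁ (likewise for
x₂, x₃), and flipping x₄, …, x₉ changes nothing. Since the xₖ occur in no other clause, such a flip
leaves the number of unsatisfied clauses of φ unchanged, so an improving flip never touches the
crown, and along any run of Local Search the xₖ stay false and c stays unsatisfied. The all-true
assignment satisfies the crown.
-/

open Function

theorem hasLit.sign_eq {n : ℕ} {c : Clause n} {y : Fin n} {s t : Bool}
    (hs : hasLit c y s) (ht : hasLit c y t) : s = t := by
  obtain ⟨i, hi, rfl⟩ := hs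
  obtain ⟨i', hi', rfl⟩ := ht
  rw [c.1.injective (hi.trans hi'.symm)]

theorem clauseSat_iff_exists_hasLit {n : ℕ} {w : Assignment n} {c : Clause n} :
    clauseSat w c ↔ ∃ y, hasLit c y (w y) := by
  constructor
  · rintro ⟨i, hi⟩
    exact ⟨c.1 i, i, rfl, hi.symm⟩
  · rintro ⟨_, i, rfl, hs⟩
    exact ⟨i, hs.symm⟩

theorem Fin.eq_or_eq_or_eq_of_ne : ∀ i a b d : Fin 3, a ≠ b → a ≠ d → b ≠ d →
    i = a ∨ i = b ∨ i = d := by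
  decide

namespace clauseIs

variable {n : ℕ} {c : Clause n} {a b d : Fin n} {ba bb bd : Bool}

theorem eq_or_eq_or_eq_of_hasLit (hc : clauseIs c a ba b bb d bd)
    (hab : a ≠ b) (had : a ≠ d) (hbd : b ≠ d) {y : Fin n} {s : Bool} (hy : hasLit c y s) :
    y = a ∨ y = b ∨ y = d := by
  obtain ⟨⟨ia, rfl, -⟩, ⟨ib, rfl, -⟩, ⟨id, rfl, -⟩⟩ := hc
  obtain ⟨i, rfl, -⟩ := hy
  rcases Fin.eq_or_eq_or_eq_of_ne i ia ib id (ne_of_apply_ne _ hab) (ne_of_apply_ne _ had)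
    (ne_of_apply_ne _ hbd) with rfl | rfl | rfl <;> simp

theorem clauseSat_iff (hc : clauseIs c a ba b bb d bd)
    (hab : a ≠ b) (had : a ≠ d) (hbd : b ≠ d) (w : Assignment n) :
    clauseSat w c ↔ w a = ba ∨ w b = bb ∨ w d = bd := by
  rw [clauseSat_iff_exists_hasLit]
  constructor
  · rintro ⟨y, hy⟩
    rcases hc.eq_or_eq_or_eq_of_hasLit hab had hbd hy with rfl | rfl | rfl
    exacts [Or.inl (hy.sign_eq hc.1), Or.inr (Or.inl (hy.sign_eq hc.2.1)),
      Or.inr (Or.inr (hy.sign_eq hc.2.2))]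
  · rintro (h | h | h)
    exacts [⟨a, h ▸ hc.1⟩, ⟨b, h ▸ hc.2.1⟩, ⟨d, h ▸ hc.2.2⟩]

theorem ne_of_hasLit {c' : Clause n} (hc : clauseIs c a ba b bb d bd)
    (hab : a ≠ b) (had : a ≠ d) (hbd : b ≠ d) {y : Fin n} {s : Bool} (hy : hasLit c' y s)
    (hya : y ≠ a) (hyb : y ≠ b) (hyd : y ≠ d) : c ≠ c' := by
  rintro rfl
  rcases hc.eq_or_eq_or_eq_of_hasLit hab had hbd hy with h | h | h
  exacts [hya h, hyb h, hyd h]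

end clauseIs

theorem clauseSat_flipVar_iff_of_forall_ne {n : ℕ} {u : Assignment n} {y : Fin n}
    {c : Clause n} (h : ∀ i, c.1 i ≠ y) : clauseSat (flipVar u y) c ↔ clauseSat u c := by
  simp only [clauseSat, litSat, flipVar, update_of_ne (h _)]

theorem flipVar_comp {n k : ℕ} {x : Fin k → Fin n} (hx : Injective x) (u : Assignment n)
    (i : Fin k) : flipVar u (x i) ∘ x = flipVar (u ∘ x) i :=
  update_comp_eq_of_injective u hx i _

theorem numUnsat_flipVar_eq_of_card_eq {n m : ℕ} {φ : Formula n m} {u : Assignment n}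
    {y : Fin n} (S : Finset (Fin m)) (hS : ∀ j ∉ S, ∀ i, (φ j).1 i ≠ y)
    (h : #{j ∈ S | ¬ clauseSat (flipVar u y) (φ j)} = #{j ∈ S | ¬ clauseSat u (φ j)}) :
    numUnsat φ (flipVar u y) = numUnsat φ u := by
  simp only [numUnsat, card_filter] at h ⊢
  rw [← sum_add_sum_compl S, ← sum_add_sum_compl S, h]
  congr 1
  refine sum_congr rfl fun j hj => ?_
  rw [clauseSat_flipVar_iff_of_forall_ne (hS j (mem_compl.1 hj))]

/-- The number of unsatisfied clauses among `c, c₁, c₂, c₃` when `x_{k+1}` has value `b k`. -/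
def crownUnsat (b : Fin 9 → Bool) : ℕ :=
  (if b 0 = true ∨ b 1 = true ∨ b 2 = true then 0 else 1) +
  (if b 0 = false ∨ b 3 = true ∨ b 4 = true then 0 else 1) +
  (if b 1 = false ∨ b 5 = true ∨ b 6 = true then 0 else 1) +
  (if b 2 = false ∨ b 7 = true ∨ b 8 = true then 0 else 1)

theorem crownUnsat_flipVar_false (k : Fin 9) :
    crownUnsat (flipVar (fun _ => false) k) = crownUnsat (fun _ => false) := by
  revert k
  decide

structure IsCrown {n m : ℕ} (φ : Formula n m) (x : Fin 9 → Fin n) (j0 j1 j2 j3 : Fin m) :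
    Prop where
  injective : Injective x
  clause0 : clauseIs (φ j0) (x 0) true (x 1) true (x 2) true
  clause1 : clauseIs (φ j1) (x 0) false (x 3) true (x 4) true
  clause2 : clauseIs (φ j2) (x 1) false (x 5) true (x 6) true
  clause3 : clauseIs (φ j3) (x 2) false (x 7) true (x 8) true
  isolated : ∀ (j : Fin m) (i : Fin 3) (k : Fin 9),
    (φ j).1 i = x k → j = j0 ∨ j = j1 ∨ j = j2 ∨ j = j3

namespace IsCrown

variable {n m : ℕ} {φ : Formula n m} {x : Fin 9 → Fin n} {j0 j1 j2 j3 : Fin m}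

theorem clauseSat_iff (hφ : IsCrown φ x j0 j1 j2 j3) (w : Assignment n) :
    (clauseSat w (φ j0) ↔ w (x 0) = true ∨ w (x 1) = true ∨ w (x 2) = true) ∧
    (clauseSat w (φ j1) ↔ w (x 0) = false ∨ w (x 3) = true ∨ w (x 4) = true) ∧
    (clauseSat w (φ j2) ↔ w (x 1) = false ∨ w (x 5) = true ∨ w (x 6) = true) ∧
    (clauseSat w (φ j3) ↔ w (x 2) = false ∨ w (x 7) = true ∨ w (x 8) = true) := by
  refine ⟨hφ.clause0.clauseSat_iff ?_ ?_ ?_ w, hφ.clause1.clauseSat_iff ?_ ?_ ?_ w,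
    hφ.clause2.clauseSat_iff ?_ ?_ ?_ w, hφ.clause3.clauseSat_iff ?_ ?_ ?_ w⟩
  all_goals exact hφ.injective.ne (by decide)

theorem index_ne (hφ : IsCrown φ x j0 j1 j2 j3) :
    j0 ≠ j1 ∧ j0 ≠ j2 ∧ j0 ≠ j3 ∧ j1 ≠ j2 ∧ j1 ≠ j3 ∧ j2 ≠ j3 := by
  have hsign {j j' : Fin m} {k : Fin 9} (h : hasLit (φ j) (x k) true)
      (h' : hasLit (φ j') (x k) false) : j ≠ j' := by
    rintro rfl
    exact Bool.noConfusion (h.sign_eq h')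
  refine ⟨hsign hφ.clause0.1 hφ.clause1.1, hsign hφ.clause0.2.1 hφ.clause2.1,
    hsign hφ.clause0.2.2 hφ.clause3.1, fun h => ?_, fun h => ?_, fun h => ?_⟩
  · refine hφ.clause1.ne_of_hasLit ?_ ?_ ?_ hφ.clause2.1 ?_ ?_ ?_ (congrArg φ h)
    all_goals exact hφ.injective.ne (by decide)
  · refine hφ.clause1.ne_of_hasLit ?_ ?_ ?_ hφ.clause3.1 ?_ ?_ ?_ (congrArg φ h)
    all_goals exact hφ.injective.ne (by decide)
  · refine hφ.clause2.ne_of_hasLit ?_ ?_ ?_ hφ.clause3.1 ?_ ?_ ?_ (congrArg φ h)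
    all_goals exact hφ.injective.ne (by decide)

theorem card_filter_not_clauseSat (hφ : IsCrown φ x j0 j1 j2 j3) (w : Assignment n) :
    #{j ∈ {j0, j1, j2, j3} | ¬ clauseSat w (φ j)} = crownUnsat (w ∘ x) := by
  obtain ⟨h01, h02, h03, h12, h13, h23⟩ := hφ.index_ne
  obtain ⟨sat0, sat1, sat2, sat3⟩ := hφ.clauseSat_iff w
  rw [card_filter, sum_insert (by simp [h01, h02, h03]), sum_insert (by simp [h12, h13]),
    sum_insert (by simp [h23]), sum_singleton]
  simp only [crownUnsat, comp_apply, sat0, sat1, sat2, sat3, ite_not, add_assoc]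

theorem numUnsat_flipVar (hφ : IsCrown φ x j0 j1 j2 j3) {u : Assignment n}
    (hu : ∀ k, u (x k) = false) (k : Fin 9) :
    numUnsat φ (flipVar u (x k)) = numUnsat φ u := by
  have hux : u ∘ x = fun _ => false := funext hu
  refine numUnsat_flipVar_eq_of_card_eq {j0, j1, j2, j3} (fun j hj i hi => hj ?_) ?_
  · simpa using hφ.isolated j i k hi
  · rw [hφ.card_filter_not_clauseSat, hφ.card_filter_not_clauseSat, flipVar_comp hφ.injective,
      hux, crownUnsat_flipVar_false]

end IsCrown

def ImprovingFlip {n m : ℕ} (φ : Formula n m) (a b : Assignment n) : Prop :=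
  ∃ i, numUnsat φ b < numUnsat φ a ∧ b = flipVar a i

theorem ImprovingFlip.reflTransGen_apply_eq_false {n m : ℕ} {φ : Formula n m} {ι : Type*}
    {x : ι → Fin n}
    (hx : ∀ w : Assignment n, (∀ k, w (x k) = false) →
      ∀ k, numUnsat φ w ≤ numUnsat φ (flipVar w (x k)))
    {u v : Assignment n} (hu : ∀ k, u (x k) = false)
    (huv : Relation.ReflTransGen (ImprovingFlip φ) u v) : ∀ k, v (x k) = false := by
  induction huv with
  | refl => exact hu
  | tail _ hstep ih =>
    obtain ⟨i, hlt, rfl⟩ := hstep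
    intro k
    have hi : x k ≠ i := by
      rintro rfl
      exact (hx _ ih k).not_gt hlt
    rw [flipVar, update_of_ne hi, ih k]

/-- **Lemma (crowns block Local Search).**  Suppose `φ` contains a crown: clauses
`c = (x₁ ∨ x₂ ∨ x₃)`, `c₁ = (¬x₁ ∨ x₄ ∨ x₅)`, `c₂ = (¬x₂ ∨ x₆ ∨ x₇)`,
`c₃ = (¬x₃ ∨ x₈ ∨ x₉)` on nine distinct variables that appear in no other clause of
`φ`.  (Here `x k` for `k : Fin 9` denotes `x_{k+1}`, and `j0, j1, j2, j3` are the
positions of `c, c₁, c₂, c₃`.)  Then for every assignment `u` assigning `0` to all of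
`x₁, …, x₉`: the clause `c` is unsatisfied; no flip of one of `x₁, …, x₉` strictly
decreases the number of unsatisfied clauses; consequently along any sequence of
strictly improving flips (in particular, along any run of Local Search) the values of
`x₁, …, x₉` stay `0` and `c` stays unsatisfied — even though the crown subformula is
satisfiable. -/
theorem crown_blocks_local_search {n m : ℕ} (φ : Formula n m)
    (x : Fin 9 → Fin n) (hinj : Function.Injective x)
    (j0 j1 j2 j3 : Fin m)
    (hc  : clauseIs (φ j0) (x 0) true (x 1) true (x 2) true)
    (hc1 : clauseIs (φ j1) (x 0) false (x 3) true (x 4) true)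
    (hc2 : clauseIs (φ j2) (x 1) false (x 5) true (x 6) true)
    (hc3 : clauseIs (φ j3) (x 2) false (x 7) true (x 8) true)
    (honly : ∀ (j : Fin m) (i : Fin 3) (k : Fin 9),
        (φ j).1 i = x k → j = j0 ∨ j = j1 ∨ j = j2 ∨ j = j3)
    (u : Assignment n) (hu : ∀ k, u (x k) = false) :
    (¬ clauseSat u (φ j0)) ∧
    (∀ k : Fin 9, ¬ (numUnsat φ (flipVar u (x k)) < numUnsat φ u)) ∧
    (∀ v : Assignment n,
        Relation.ReflTransGen
          (fun a b => ∃ i : Fin n, numUnsat φ b < numUnsat φ a ∧ b = flipVar a i) u v →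
        (∀ k, v (x k) = false) ∧ ¬ clauseSat v (φ j0)) ∧
    (∃ w : Assignment n, clauseSat w (φ j0) ∧ clauseSat w (φ j1) ∧
        clauseSat w (φ j2) ∧ clauseSat w (φ j3)) := by
  have hφ : IsCrown φ x j0 j1 j2 j3 := ⟨hinj, hc, hc1, hc2, hc3, honly⟩
  have hunsat {w : Assignment n} (hw : ∀ k, w (x k) = false) : ¬ clauseSat w (φ j0) := by
    simp [(hφ.clauseSat_iff w).1, hw]
  have hallTrue {j : Fin m} {y : Fin n} (h : hasLit (φ j) y true) :
      clauseSat (fun _ => true) (φ j) :=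
    clauseSat_iff_exists_hasLit.2 ⟨y, h⟩
  refine ⟨hunsat hu, fun k => (hφ.numUnsat_flipVar hu k).not_lt, fun v huv => ?_,
    ⟨fun _ => true, hallTrue hc.1, hallTrue hc1.2.1, hallTrue hc2.2.1, hallTrue hc3.2.1⟩⟩
  have hv := ImprovingFlip.reflTransGen_apply_eq_false
    (fun w hw k => (hφ.numUnsat_flipVar hw k).ge) hu huv
  exact ⟨hv, hunsat hv⟩
end

section
/- Let (D_0, D_1, …, D_l) be an integer-valued random process, d > 0 a real, and L, H integer constants such that: (a) D_0 = 0 and 0 < L < H; (b) |D_{τ+1} − D_τ| = 1 for all τ; (c) whenever L ≤ D_τ ≤ H, the conditional expectation satisfies E[D_{τ+1} | D_τ] < D_τ − d. Then the probability that there exists τ ≤ l with D_τ > H is less than l·e^{−d(H−L)/2}. -/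
/-!
The potential `f = stripPotential d H`, `f k = exp (d * min k (H + 1))`, grows in expectation by at
most `c = stripLeak d L` per step. For a step `s = ±1` from `k` we have
`f (k + s) ≤ f k + c + β k * (s + d)` with `β = stripSlope d L H`: inside the strip this is
`cosh d - d * sinh d ≤ 1`, below it an upward step costs at most `c`, and above `H` the potential
is constant. As `β (D τ)` is a bounded function of `D τ`, the drift condition makes the expectation
of `β (D τ) * (D (τ + 1) - D τ + d)` nonpositive, so `E f (D τ) ≤ 1 + l * c`. Markov's inequality
gives `P (D τ > H) ≤ (1 + l * c) * exp (-d * (H + 1))`, and the union bound over `1 ≤ τ ≤ l`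
yields the claim whenever `l * exp (-d * (H - L) / 2) ≤ 1`; otherwise the right-hand side
exceeds `1`.
-/

open MeasureTheory Real

lemma Real.cosh_sub_mul_sinh_le_one (x : ℝ) : cosh x - x * sinh x ≤ 1 := by
  have h₁ : (1 - x) * exp x ≤ 1 := by
    calc (1 - x) * exp x ≤ exp (-x) * exp x := by
          gcongr; linarith [add_one_le_exp (-x)]
      _ = 1 := by rw [← exp_add, neg_add_cancel, exp_zero]
  have h₂ : (1 + x) * exp (-x) ≤ 1 := by
    calc (1 + x) * exp (-x) ≤ exp x * exp (-x) := by
          gcongr; linarith [add_one_le_exp x]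
      _ = 1 := by rw [← exp_add, add_neg_cancel, exp_zero]
  rw [cosh_eq, sinh_eq]
  linarith

noncomputable def stripPotential (d : ℝ) (H k : ℤ) : ℝ := exp (d * (min k (H + 1) : ℤ))

noncomputable def stripSlope (d : ℝ) (L H k : ℤ) : ℝ :=
  if L ≤ k ∧ k ≤ H then exp (d * k) * sinh d else 0

noncomputable def stripLeak (d : ℝ) (L : ℤ) : ℝ := exp (d * (L - 1)) * (exp d - 1)

section StripPotential

variable {d : ℝ} {L H : ℤ}

lemma stripPotential_of_le {k : ℤ} (hk : k ≤ H + 1) : stripPotential d H k = exp (d * k) := by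
  rw [stripPotential, min_eq_left hk]

lemma stripPotential_succ_of_lt {k : ℤ} (hk : H < k) :
    stripPotential d H (k + 1) = stripPotential d H k := by
  rw [stripPotential, stripPotential, min_eq_right (by omega), min_eq_right (by omega)]

lemma stripPotential_pos (k : ℤ) : 0 < stripPotential d H k := exp_pos _

lemma stripPotential_mono (hd : 0 ≤ d) : Monotone (stripPotential d H) := fun _ _ h =>
  exp_le_exp.2 <| mul_le_mul_of_nonneg_left (by exact_mod_cast min_le_min_right _ h) hd

lemma stripPotential_le (hd : 0 ≤ d) (k : ℤ) : stripPotential d H k ≤ exp (d * (H + 1)) := by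
  have : ((min k (H + 1) : ℤ) : ℝ) ≤ H + 1 := by exact_mod_cast min_le_right k (H + 1)
  exact exp_le_exp.2 (mul_le_mul_of_nonneg_left this hd)

lemma stripPotential_zero_le_one (hd : 0 ≤ d) : stripPotential d H 0 ≤ 1 := by
  rw [stripPotential, ← exp_zero]
  have : ((min 0 (H + 1) : ℤ) : ℝ) ≤ 0 := by exact_mod_cast min_le_left 0 (H + 1)
  exact exp_le_exp.2 (mul_nonpos_of_nonneg_of_nonpos hd this)

lemma stripLeak_nonneg (hd : 0 ≤ d) : 0 ≤ stripLeak d L :=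
  mul_nonneg (exp_pos _).le (by linarith [add_one_le_exp d])

lemma stripSlope_nonneg (hd : 0 ≤ d) (k : ℤ) : 0 ≤ stripSlope d L H k := by
  unfold stripSlope
  split_ifs
  exacts [mul_nonneg (exp_pos _).le (sinh_nonneg_iff.2 hd), le_rfl]

lemma stripSlope_le (hd : 0 ≤ d) (k : ℤ) : stripSlope d L H k ≤ exp (d * H) * sinh d := by
  unfold stripSlope
  split_ifs with hk
  · gcongr
    exact_mod_cast hk.2
  · exact mul_nonneg (exp_pos _).le (sinh_nonneg_iff.2 hd)

lemma stripPotential_succ_le_add_stripLeak (hd : 0 ≤ d) {k : ℤ} (hk : ¬(L ≤ k ∧ k ≤ H)) :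
    stripPotential d H (k + 1) ≤ stripPotential d H k + stripLeak d L := by
  rcases le_or_gt k H with hkH | hHk
  · have hkL : (k : ℝ) ≤ L - 1 := by exact_mod_cast (by omega : k ≤ L - 1)
    rw [stripPotential_of_le (by omega), stripPotential_of_le (by omega), stripLeak]
    push_cast
    rw [mul_add, mul_one, exp_add]
    have : exp (d * k) ≤ exp (d * (L - 1)) := exp_le_exp.2 (mul_le_mul_of_nonneg_left hkL hd)
    nlinarith [add_one_le_exp d]
  · rw [stripPotential_succ_of_lt hHk]
    linarith [stripLeak_nonneg (L := L) hd]

theorem stripPotential_add_le (hd : 0 ≤ d) {k s : ℤ} (hs : |s| = 1) :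
    stripPotential d H (k + s) ≤
      stripPotential d H k + stripLeak d L + stripSlope d L H k * (s + d) := by
  have hs' : s = 1 ∨ s = -1 := (abs_eq zero_le_one).1 hs
  by_cases hk : L ≤ k ∧ k ≤ H
  · have hexp : exp (d * (k + s : ℤ)) = exp (d * k) * (cosh d + s * sinh d) := by
      rcases hs' with rfl | rfl
      · rw [Int.cast_one, one_mul, cosh_add_sinh, ← exp_add]; push_cast; ring_nf
      · rw [Int.cast_neg, Int.cast_one, neg_one_mul, ← sub_eq_add_neg (cosh d), cosh_sub_sinh,
          ← exp_add]
        push_cast; ring_nf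
    rw [stripPotential_of_le (by omega), stripPotential_of_le (by omega), stripSlope, if_pos hk,
      hexp]
    nlinarith [mul_le_mul_of_nonneg_left (cosh_sub_mul_sinh_le_one d) (exp_pos (d * k)).le,
      stripLeak_nonneg (L := L) hd]
  · rw [stripSlope, if_neg hk, zero_mul, add_zero]
    rcases hs' with rfl | rfl
    · exact stripPotential_succ_le_add_stripLeak hd hk
    · linarith [stripPotential_mono (H := H) hd (by omega : k + -1 ≤ k),
        stripLeak_nonneg (L := L) hd]

end StripPotential

theorem integral_mul_le_of_mul_condExp_le {Ω : Type*} {m mΩ : MeasurableSpace Ω}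
    {μ : Measure Ω} [IsFiniteMeasure μ] (hm : m ≤ mΩ) {g Y Z : Ω → ℝ}
    (hg : StronglyMeasurable[m] g) {C : ℝ} (hgC : ∀ ω, ‖g ω‖ ≤ C)
    (hY : Integrable Y μ) (hZ : Integrable Z μ)
    (h : ∀ᵐ ω ∂μ, g ω * μ[Y|m] ω ≤ g ω * Z ω) :
    ∫ ω, g ω * Y ω ∂μ ≤ ∫ ω, g ω * Z ω ∂μ := by
  have hpull : ∫ ω, g ω * Y ω ∂μ = ∫ ω, g ω * μ[Y|m] ω ∂μ := by
    rw [← integral_condExp hm]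
    exact integral_congr_ae
      (condExp_stronglyMeasurable_mul_of_bound hm hg hY C (ae_of_all _ hgC))
  rw [hpull]
  have hgm : AEStronglyMeasurable g μ := (hg.mono hm).aestronglyMeasurable
  exact integral_mono_ae (integrable_condExp.bdd_mul hgm (ae_of_all _ hgC))
    (hZ.bdd_mul hgm (ae_of_all _ hgC)) h

lemma integrable_stripPotential_comp {Ω : Type*} {mΩ : MeasurableSpace Ω} {μ : Measure Ω}
    [IsFiniteMeasure μ] {d : ℝ} {H : ℤ} (hd : 0 ≤ d) {X : Ω → ℤ} (hX : Measurable X) :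
    Integrable (fun ω => stripPotential d H (X ω)) μ :=
  .of_bound
    ((measurable_from_top : Measurable (stripPotential d H)).comp hX).aestronglyMeasurable
    (exp (d * (H + 1))) (ae_of_all _ fun ω => by
      rw [norm_of_nonneg (stripPotential_pos _).le]; exact stripPotential_le hd _)

section OneStep

variable {Ω : Type*} {mΩ : MeasurableSpace Ω} {μ : Measure Ω} [IsProbabilityMeasure μ]
  {d : ℝ} {L H : ℤ}

theorem integral_stripPotential_le_add_stripLeak (hd : 0 ≤ d) {X Y : Ω → ℤ}
    (hX : Measurable X) (hY : Measurable Y)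
    (hXi : Integrable (fun ω => (X ω : ℝ)) μ) (hYi : Integrable (fun ω => (Y ω : ℝ)) μ)
    (hstep : ∀ ω, |Y ω - X ω| = 1)
    (hdrift : ∀ᵐ ω ∂μ, L ≤ X ω → X ω ≤ H →
        (μ[fun ω' => (Y ω' : ℝ) | MeasurableSpace.comap X ⊤]) ω < X ω - d) :
    ∫ ω, stripPotential d H (Y ω) ∂μ ≤ ∫ ω, stripPotential d H (X ω) ∂μ + stripLeak d L := by
  set β : Ω → ℝ := fun ω => stripSlope d L H (X ω)
  have hβ : StronglyMeasurable[MeasurableSpace.comap X ⊤] β :=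
    ((measurable_from_top : Measurable (stripSlope d L H)).comp
      (comap_measurable X)).stronglyMeasurable
  have hβC : ∀ ω, ‖β ω‖ ≤ exp (d * H) * sinh d := fun ω => by
    rw [norm_of_nonneg (stripSlope_nonneg hd _)]; exact stripSlope_le hd _
  have hXdi : Integrable (fun ω => (X ω : ℝ) - d) μ := hXi.sub (integrable_const d)
  have hβY : ∫ ω, β ω * Y ω ∂μ ≤ ∫ ω, β ω * (X ω - d) ∂μ :=
    integral_mul_le_of_mul_condExp_le hX.comap_le hβ hβC hYi hXdi <| by
      filter_upwards [hdrift] with ω hω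
      by_cases hk : L ≤ X ω ∧ X ω ≤ H
      · exact mul_le_mul_of_nonneg_left (hω hk.1 hk.2).le (stripSlope_nonneg hd _)
      · simp [β, stripSlope, if_neg hk]
  have hpt : ∀ ω, stripPotential d H (Y ω) ≤ stripPotential d H (X ω) + stripLeak d L +
      (β ω * Y ω - β ω * (X ω - d)) := fun ω => by
    have h := stripPotential_add_le (L := L) (H := H) (k := X ω) hd (hstep ω)
    rw [add_sub_cancel] at h
    push_cast at h
    simp only [β]
    linarith
  have hβm : AEStronglyMeasurable β μ := (hβ.mono hX.comap_le).aestronglyMeasurable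
  have hfX : Integrable (fun ω => stripPotential d H (X ω)) μ :=
    integrable_stripPotential_comp hd hX
  have hβYi : Integrable (fun ω => β ω * Y ω) μ := hYi.bdd_mul hβm (ae_of_all _ hβC)
  have hβXi : Integrable (fun ω => β ω * (X ω - d)) μ := hXdi.bdd_mul hβm (ae_of_all _ hβC)
  have hA : Integrable (fun ω => stripPotential d H (X ω) + stripLeak d L) μ :=
    hfX.add (integrable_const _)
  have hB : Integrable (fun ω => β ω * Y ω - β ω * (X ω - d)) μ := hβYi.sub hβXi
  calc ∫ ω, stripPotential d H (Y ω) ∂μ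
      ≤ ∫ ω, (stripPotential d H (X ω) + stripLeak d L + (β ω * Y ω - β ω * (X ω - d))) ∂μ :=
        integral_mono (integrable_stripPotential_comp hd hY) (hA.add hB) hpt
    _ = ∫ ω, stripPotential d H (X ω) ∂μ + stripLeak d L +
          (∫ ω, β ω * Y ω ∂μ - ∫ ω, β ω * (X ω - d) ∂μ) := by
        rw [integral_add hA hB,
          integral_add hfX (integrable_const _), integral_sub hβYi hβXi, integral_const,
          probReal_univ, one_smul]
    _ ≤ ∫ ω, stripPotential d H (X ω) ∂μ + stripLeak d L := by linarith

end OneStep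

section Crossing

variable {Ω : Type*} {mΩ : MeasurableSpace Ω} {D : ℕ → Ω → ℤ} {l : ℕ}

lemma abs_le_of_abs_succ_sub_le_one (h0 : ∀ ω, D 0 ω = 0)
    (hstep : ∀ τ < l, ∀ ω, |D (τ + 1) ω - D τ ω| ≤ 1) : ∀ τ ≤ l, ∀ ω, |D τ ω| ≤ τ := by
  intro τ
  induction τ with
  | zero => simp [h0]
  | succ n ih =>
    intro hn ω
    have h₁ := ih (by omega) ω
    have h₂ := hstep n (by omega) ω
    rw [abs_le] at h₁ h₂ ⊢
    push_cast
    omega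

lemma measure_setOf_exists_le_le_mul (μ : Measure Ω) {P : ℕ → Ω → Prop} (h0 : ∀ ω, ¬P 0 ω)
    {M : ENNReal} (hM : ∀ τ < l, μ {ω | P (τ + 1) ω} ≤ M) :
    μ {ω | ∃ τ ≤ l, P τ ω} ≤ l * M := by
  have hsub : {ω | ∃ τ ≤ l, P τ ω} ⊆ ⋃ τ ∈ Finset.range l, {ω | P (τ + 1) ω} := by
    rintro ω ⟨_ | τ, hτ, hP⟩
    · exact absurd hP (h0 ω)
    · exact Set.mem_biUnion (Finset.mem_range.2 (by omega)) hP
  calc μ {ω | ∃ τ ≤ l, P τ ω} ≤ ∑ τ ∈ Finset.range l, μ {ω | P (τ + 1) ω} :=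
        (measure_mono hsub).trans (measure_biUnion_finset_le _ _)
    _ ≤ ∑ _τ ∈ Finset.range l, M := Finset.sum_le_sum fun τ hτ => hM τ (Finset.mem_range.1 hτ)
    _ = l * M := by simp

variable {μ : Measure Ω} [IsProbabilityMeasure μ] {d : ℝ} {L H : ℤ}

theorem integral_stripPotential_le (hd : 0 ≤ d) (hD : ∀ τ, Measurable (D τ))
    (h0 : ∀ ω, D 0 ω = 0) (hstep : ∀ τ < l, ∀ ω, |D (τ + 1) ω - D τ ω| = 1)
    (hdrift : ∀ τ < l, ∀ᵐ ω ∂μ, L ≤ D τ ω → D τ ω ≤ H →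
        (μ[fun ω' => (D (τ + 1) ω' : ℝ) | MeasurableSpace.comap (D τ) ⊤]) ω < D τ ω - d) :
    ∀ τ ≤ l, ∫ ω, stripPotential d H (D τ ω) ∂μ ≤ 1 + τ * stripLeak d L := by
  have hbdd := abs_le_of_abs_succ_sub_le_one h0 fun τ hτ ω => (hstep τ hτ ω).le
  have hint : ∀ τ ≤ l, Integrable (fun ω => (D τ ω : ℝ)) μ := fun τ hτ =>
    .of_bound
      ((measurable_from_top : Measurable ((↑) : ℤ → ℝ)).comp (hD τ)).aestronglyMeasurable
      τ (ae_of_all _ fun ω => by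
        rw [Real.norm_eq_abs, ← Int.cast_abs]; exact_mod_cast hbdd τ hτ ω)
  intro τ
  induction τ with
  | zero =>
    intro _
    simpa [h0] using stripPotential_zero_le_one hd
  | succ n ih =>
    intro hn
    have := integral_stripPotential_le_add_stripLeak hd (hD n) (hD (n + 1)) (hint n (by omega))
      (hint (n + 1) hn) (hstep n hn) (hdrift n hn)
    push_cast
    linarith [ih (by omega)]

lemma measureReal_lt_le_mul_integral_stripPotential (hd : 0 < d) {X : Ω → ℤ}
    (hX : Measurable X) :
    μ.real {ω | H < X ω} ≤ exp (-(d * (H + 1))) * ∫ ω, stripPotential d H (X ω) ∂μ := by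
  have hset : {ω | exp (d * (H + 1)) ≤ stripPotential d H (X ω)} = {ω | H < X ω} := by
    ext ω
    simp only [Set.mem_ofPred_eq, stripPotential, exp_le_exp, mul_le_mul_iff_right₀ hd]
    norm_cast
    omega
  have := mul_meas_ge_le_integral_of_nonneg (ae_of_all _ fun ω => (stripPotential_pos _).le)
    (integrable_stripPotential_comp (μ := μ) (H := H) hd.le hX) (exp (d * (H + 1)))
  rw [hset] at this
  rw [exp_neg, ← div_eq_inv_mul, le_div_iff₀ (exp_pos _), mul_comm]
  exact this

end Crossing

lemma one_add_mul_stripLeak_mul_exp_lt {d : ℝ} {L H : ℤ} (hd : 0 < d) (hLH : 2 ≤ L + H) {l : ℝ}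
    (hl : l * exp (-(d * (H - L) / 2)) ≤ 1) :
    (1 + l * stripLeak d L) * exp (-(d * (H + 1))) < exp (-(d * (H - L) / 2)) := by
  set x := exp (-(d * (H - L) / 2))
  have h₁ : exp (-(d * (H + 1))) ≤ x * exp (-(2 * d)) := by
    have : (2 : ℝ) ≤ L + H := by exact_mod_cast hLH
    rw [← exp_add]
    exact exp_le_exp.2 (by nlinarith)
  have h₂ : stripLeak d L * exp (-(d * (H + 1))) = x * (x * (exp (-d) - exp (-(2 * d)))) := by
    simp only [x, stripLeak, mul_sub, sub_mul, mul_one, ← exp_add]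
    congr 2 <;> ring
  have h₃ : 0 ≤ x * (exp (-d) - exp (-(2 * d))) :=
    mul_nonneg (exp_pos _).le (sub_nonneg.2 (exp_le_exp.2 (by linarith)))
  calc (1 + l * stripLeak d L) * exp (-(d * (H + 1)))
      = exp (-(d * (H + 1))) + l * x * (x * (exp (-d) - exp (-(2 * d)))) := by
        rw [add_mul, one_mul, mul_assoc, h₂, mul_assoc]
    _ ≤ x * exp (-(2 * d)) + 1 * (x * (exp (-d) - exp (-(2 * d)))) :=
        add_le_add h₁ (mul_le_mul_of_nonneg_right hl h₃)
    _ = x * exp (-d) := by ring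
    _ < x := mul_lt_of_lt_one_right (exp_pos _) (exp_lt_one_iff.2 (by linarith))

/-- **Lemma (escaping a strip with drift).**  Let `(D_0, …, D_l)` be an integer random
process, `d > 0`, and `L, H` integer constants with `D_0 = 0`, `0 < L < H`, whose
increments have absolute value `1`, and such that whenever `L ≤ D_τ ≤ H` the drift
condition `E[D_{τ+1} | D_τ] < D_τ − d` holds.  Then the probability that `D_τ > H` for
some `τ ≤ l` is less than `l · exp(−d(H−L)/2)`. -/
theorem strip_crossing_bound {Ω : Type*} {mΩ : MeasurableSpace Ω}
    (μ : Measure Ω) [IsProbabilityMeasure μ]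
    (l : ℕ) (hl : 1 ≤ l) (D : ℕ → Ω → ℤ) (hD : ∀ τ, Measurable (D τ))
    (d : ℝ) (hd : 0 < d) (L H : ℤ) (hL : 0 < L) (hLH : L < H)
    (h0 : ∀ ω, D 0 ω = 0)
    (hstep : ∀ τ < l, ∀ ω, |D (τ + 1) ω - D τ ω| = 1)
    (hdrift : ∀ τ < l, ∀ᵐ ω ∂μ, L ≤ D τ ω → D τ ω ≤ H →
        (μ[fun ω' => ((D (τ + 1) ω' : ℤ) : ℝ) | MeasurableSpace.comap (D τ) ⊤]) ω <
          (D τ ω : ℝ) - d) :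
    μ {ω | ∃ τ ≤ l, H < D τ ω} <
      ENNReal.ofReal (l * Real.exp (-(d * ((H : ℝ) - (L : ℝ)) / 2))) := by
  set M := (1 + l * stripLeak d L) * exp (-(d * (H + 1)))
  have hpot := integral_stripPotential_le hd.le hD h0 hstep hdrift
  have hM : ∀ τ < l, μ {ω | H < D (τ + 1) ω} ≤ ENNReal.ofReal M := fun τ hτ => by
    rw [← ofReal_measureReal]
    refine ENNReal.ofReal_le_ofReal ?_
    calc μ.real {ω | H < D (τ + 1) ω}
        ≤ exp (-(d * (H + 1))) * ∫ ω, stripPotential d H (D (τ + 1) ω) ∂μ :=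
          measureReal_lt_le_mul_integral_stripPotential hd (hD (τ + 1))
      _ ≤ exp (-(d * (H + 1))) * (1 + l * stripLeak d L) := by
          gcongr
          refine (hpot (τ + 1) hτ).trans ?_
          gcongr
          · exact stripLeak_nonneg hd.le
          · exact_mod_cast hτ
      _ = M := mul_comm _ _
  rcases le_or_gt (l * exp (-(d * (H - L) / 2))) 1 with hlE | hlE
  · calc μ {ω | ∃ τ ≤ l, H < D τ ω} ≤ l * ENNReal.ofReal M :=
          measure_setOf_exists_le_le_mul μ (fun ω => by simp [h0, hLH.le.trans' hL.le]) hM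
      _ = ENNReal.ofReal (l * M) := by
          rw [← ENNReal.ofReal_natCast, ← ENNReal.ofReal_mul l.cast_nonneg]
      _ < _ := (ENNReal.ofReal_lt_ofReal_iff (by positivity)).2 <| mul_lt_mul_of_pos_left
          (one_add_mul_stripLeak_mul_exp_lt hd (by omega) hlE) (by exact_mod_cast hl)
  · refine prob_le_one.trans_lt ?_
    rwa [← ENNReal.ofReal_one, ENNReal.ofReal_lt_ofReal_iff (by positivity)]
end
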